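/- arXiv:2503.01580 — 2 statements merged into one kernel-verified Lean document; each statement's English description precedes it below -/
import Mathlib

section
/- Let f : X → {0,1} be the ground-truth labeling, H a hypothesis class containing h and h̃, and D_old, D_sub probability distributions on X. Then ε(h|D_old) ≤ ε(h̃|D_old) + (1/2)·d_{HΔH}(D_old, D_sub) + ε(h, h̃|D_sub), where ε(h|D) := Pr_{x∼D}[h(x) ≠ f(x)] and ε(h,h'|D) := Pr_{x∼D}[h(x) ≠ h'(x)]. -/
open MeasureTheory

/-- disagreement error ε(h,h'|μ) as a real number -/
noncomputable def disErr {X : Type*} [MeasurableSpace X] (μ : Measure X)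
    (g g' : X → Bool) : ℝ := (μ {x | g x ≠ g' x}).toReal

/-- HΔH divergence -/
noncomputable def dHH {X : Type*} [MeasurableSpace X] (H : Set (X → Bool))
    (μ ν : Measure X) : ℝ :=
  2 * sSup {r : ℝ | ∃ g ∈ H, ∃ g' ∈ H, r = |disErr μ g g' - disErr ν g g'|}

lemma disErr_nonneg {X : Type*} [MeasurableSpace X] (μ : Measure X)
    (g g' : X → Bool) : 0 ≤ disErr μ g g' := ENNReal.toReal_nonneg

lemma disErr_le_one {X : Type*} [MeasurableSpace X] (μ : Measure X)
    [IsProbabilityMeasure μ] (g g' : X → Bool) : disErr μ g g' ≤ 1 := by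
  have := prob_le_one (μ := μ) (s := {x | g x ≠ g' x})
  simpa [disErr] using ENNReal.toReal_le_of_le_ofReal zero_le_one (by simpa using this)

lemma disErr_triangle {X : Type*} [MeasurableSpace X] (μ : Measure X)
    [IsProbabilityMeasure μ] (a b c : X → Bool) :
    disErr μ a c ≤ disErr μ a b + disErr μ b c := by
  have hsub : {x | a x ≠ c x} ⊆ {x | a x ≠ b x} ∪ {x | b x ≠ c x} := by
    intro x hx
    by_cases hab : a x = b x
    · right; simpa [Set.mem_setOf_eq, hab] using hx
    · left; exact hab
  have h1 : μ {x | a x ≠ c x} ≤ μ {x | a x ≠ b x} + μ {x | b x ≠ c x} :=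
    le_trans (measure_mono hsub) (measure_union_le _ _)
  have hfin : ∀ s : Set X, μ s ≠ ⊤ := fun s => measure_ne_top μ s
  unfold disErr
  rw [← ENNReal.toReal_add (hfin _) (hfin _)]
  exact ENNReal.toReal_mono (by simp [ENNReal.add_ne_top, hfin]) h1

/-- ε(h|D_old) ≤ ε(h̃|D_old) + (1/2)·d_{HΔH}(D_old,D_sub) + ε(h,h̃|D_sub) -/
theorem upper_bound {X : Type*} [MeasurableSpace X]
    (f : X → Bool) (H : Set (X → Bool))
    (Dold Dsub : Measure X) [IsProbabilityMeasure Dold] [IsProbabilityMeasure Dsub]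
    (h htil : X → Bool) (hh : h ∈ H) (hhtil : htil ∈ H) :
    disErr Dold h f ≤
      disErr Dold htil f + (1 / 2) * dHH H Dold Dsub + disErr Dsub h htil := by
  set S := {r : ℝ | ∃ g ∈ H, ∃ g' ∈ H, r = |disErr Dold g g' - disErr Dsub g g'|}
  have hbdd : BddAbove S := by
    refine ⟨1, fun r hr => ?_⟩
    obtain ⟨g, _, g', _, rfl⟩ := hr
    rw [abs_sub_le_iff]
    constructor <;> nlinarith [disErr_le_one Dold g g', disErr_le_one Dsub g g',
      disErr_nonneg Dold g g', disErr_nonneg Dsub g g']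
  have hmem : |disErr Dold h htil - disErr Dsub h htil| ∈ S :=
    ⟨h, hh, htil, hhtil, rfl⟩
  have hsup : |disErr Dold h htil - disErr Dsub h htil| ≤ sSup S := le_csSup hbdd hmem
  have htri1 : disErr Dold h f ≤ disErr Dold h htil + disErr Dold htil f :=
    disErr_triangle Dold h htil f
  have h2 : disErr Dold h htil ≤ disErr Dsub h htil + sSup S := by
    have := abs_sub_abs_le_abs_sub (disErr Dold h htil) (disErr Dsub h htil)
    have h3 : disErr Dold h htil - disErr Dsub h htil ≤ sSup S :=
      le_trans (le_abs_self _) hsup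
    linarith
  have : (1 / 2 : ℝ) * dHH H Dold Dsub = sSup S := by
    unfold dHH; ring
  linarith
end

section
/- Greedy maximization of a monotone submodular function F with F(∅) = 0 under a cardinality constraint m achieves value at least (1 − 1/e) times the optimum: if S_greedy is obtained by m greedy steps (each adding the element with largest marginal gain), then F(S_greedy) ≥ (1 − 1/e)·max_{|S| ≤ m} F(S). -/
/-- F is monotone: F(A) ≤ F(B) whenever A ⊆ B. -/
def MonotoneSetFn {V : Type*} (F : Finset V → ℝ) : Prop :=
  ∀ A B : Finset V, A ⊆ B → F A ≤ F B

/-- F is submodular: diminishing marginal returns. -/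
def SubmodularSetFn {V : Type*} [DecidableEq V] (F : Finset V → ℝ) : Prop :=
  ∀ A B : Finset V, ∀ x : V, A ⊆ B → x ∉ B →
    F (insert x B) - F B ≤ F (insert x A) - F A

lemma key_submod_ineq {V : Type*} [DecidableEq V] (F : Finset V → ℝ)
    (hFm : MonotoneSetFn F) (hFs : SubmodularSetFn F) (A T : Finset V) :
    F T ≤ F A + ∑ x ∈ T \ A, (F (insert x A) - F A) := by
  have h : ∀ T : Finset V, F (A ∪ T) ≤ F A + ∑ x ∈ T \ A, (F (insert x A) - F A) := by
    intro T
    induction T using Finset.induction_on with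
    | empty => simp
    | @insert a T' ha ih =>
      by_cases haA : a ∈ A
      · have h1 : A ∪ insert a T' = A ∪ T' := by
          ext y; simp; intro h; subst h; tauto
        have h2 : insert a T' \ A = T' \ A := by
          ext y; simp only [Finset.mem_sdiff, Finset.mem_insert]
          constructor
          · rintro ⟨rfl | h, hA⟩
            · exact absurd haA hA
            · exact ⟨h, hA⟩
          · rintro ⟨h, hA⟩; exact ⟨Or.inr h, hA⟩
        rw [h1, h2]; exact ih
      · have h1 : A ∪ insert a T' = insert a (A ∪ T') := Finset.union_insert a A T'
        have hsub := hFs A (A ∪ T') a Finset.subset_union_left (by simp [haA, ha])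
        have h2 : insert a T' \ A = insert a (T' \ A) := by
          ext y; simp only [Finset.mem_sdiff, Finset.mem_insert]
          constructor
          · rintro ⟨rfl | h, hA⟩
            · exact Or.inl rfl
            · exact Or.inr ⟨h, hA⟩
          · rintro (rfl | ⟨h, hA⟩)
            · exact ⟨Or.inl rfl, haA⟩
            · exact ⟨Or.inr h, hA⟩
        have h3 : a ∉ T' \ A := by simp [ha]
        rw [h1, h2, Finset.sum_insert h3]
        linarith
  calc F T ≤ F (A ∪ T) := hFm T (A ∪ T) Finset.subset_union_right
    _ ≤ _ := h T

/-- Greedy maximization of a monotone submodular function with F(∅)=0 under a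
    cardinality constraint m achieves at least a (1 − 1/e) fraction of the optimum. -/
theorem greedy_submodular_bound {V : Type*} [Fintype V] [DecidableEq V]
    (F : Finset V → ℝ) (hFm : MonotoneSetFn F) (hFs : SubmodularSetFn F)
    (h0 : F ∅ = 0) (m : ℕ) (S : ℕ → Finset V) (hS0 : S 0 = ∅)
    (hstep : ∀ i < m, ∃ x ∉ S i, S (i + 1) = insert x (S i) ∧
      ∀ y ∉ S i, F (insert y (S i)) ≤ F (insert x (S i)))
    (T : Finset V) (hT : T.card ≤ m) :
    (1 - 1 / Real.exp 1) * F T ≤ F (S m) := by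
  rcases Nat.eq_zero_or_pos m with rfl | hm
  · have hTe : T = ∅ := Finset.card_eq_zero.mp (Nat.le_zero.mp hT)
    rw [hTe, h0, hS0, h0]; norm_num
  have hmR : (0:ℝ) < (m:ℝ) := by exact_mod_cast hm
  set r : ℝ := 1 - 1 / m with hr
  have hr0 : 0 ≤ r := by
    rw [hr]
    have : 1 / (m:ℝ) ≤ 1 := by
      rw [div_le_one hmR]; exact_mod_cast hm
    linarith
  have hFT0 : 0 ≤ F T := by
    have := hFm ∅ T (Finset.empty_subset T); linarith
  -- geometric decay of the gap
  have main : ∀ i ≤ m, F T - F (S i) ≤ r ^ i * F T := by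
    intro i hi
    induction i with
    | zero => simp [hS0, h0]
    | succ i ih =>
      have hi' : i < m := hi
      have ihh := ih (le_of_lt hi')
      obtain ⟨x, hx, hSx, hmax⟩ := hstep i hi'
      set δ : ℝ := F (S (i+1)) - F (S i) with hδ
      have hδ0 : 0 ≤ δ := by
        have := hFm (S i) (S (i+1)) (by rw [hSx]; exact Finset.subset_insert _ _)
        linarith
      -- each marginal term bounded by δ
      have hterm : ∀ y ∈ T \ S i, F (insert y (S i)) - F (S i) ≤ δ := by
        intro y hy
        have hy' : y ∉ S i := (Finset.mem_sdiff.mp hy).2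
        have := hmax y hy'
        rw [hδ, hSx]; linarith
      have hsum : ∑ y ∈ T \ S i, (F (insert y (S i)) - F (S i))
          ≤ (T \ S i).card * δ := by
        calc _ ≤ ∑ _y ∈ T \ S i, δ := Finset.sum_le_sum hterm
          _ = (T \ S i).card * δ := by rw [Finset.sum_const, nsmul_eq_mul]
      have hcard : ((T \ S i).card : ℝ) ≤ (m : ℝ) := by
        exact_mod_cast le_trans (Finset.card_le_card (Finset.sdiff_subset)) hT
      have hkey := key_submod_ineq F hFm hFs (S i) T
      have hgap : F T - F (S i) ≤ (m:ℝ) * δ := by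
        have : ((T \ S i).card : ℝ) * δ ≤ (m:ℝ) * δ :=
          mul_le_mul_of_nonneg_right hcard hδ0
        linarith
      have hstep' : F T - F (S (i+1)) ≤ r * (F T - F (S i)) := by
        have hδge : (F T - F (S i)) / m ≤ δ := by
          rw [div_le_iff₀ hmR]; linarith
        have : F T - F (S (i+1)) = (F T - F (S i)) - δ := by rw [hδ]; ring
        rw [this, hr]
        have : (1 - 1 / (m:ℝ)) * (F T - F (S i))
            = (F T - F (S i)) - (F T - F (S i)) / m := by ring
        rw [this]; linarith
      calc F T - F (S (i+1)) ≤ r * (F T - F (S i)) := hstep'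
        _ ≤ r * (r ^ i * F T) := mul_le_mul_of_nonneg_left ihh hr0
        _ = r ^ (i+1) * F T := by ring
  have hmain := main m le_rfl
  -- (1 - 1/m)^m ≤ exp(-1)
  have hre : r ≤ Real.exp (-(1/m)) := by
    have := Real.add_one_le_exp (-(1/(m:ℝ)))
    rw [hr]; linarith
  have hpow : r ^ m ≤ Real.exp (-1) := by
    calc r ^ m ≤ (Real.exp (-(1/m))) ^ m := pow_le_pow_left₀ hr0 hre m
      _ = Real.exp (-(1/m) * m) := by rw [← Real.exp_nat_mul]; ring_nf
      _ = Real.exp (-1) := by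
          congr 1
          field_simp
  have hfin : r ^ m * F T ≤ Real.exp (-1) * F T :=
    mul_le_mul_of_nonneg_right hpow hFT0
  have hexp : Real.exp (-1) = 1 / Real.exp 1 := by
    rw [Real.exp_neg]; ring
  rw [hexp] at hfin
  linarith
end
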